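/- arXiv:1810.02158 — 6 statements merged into one kernel-verified Lean document; each statement's English description precedes it below -/
import Mathlib

section
/- For every ζ > 0, L₀(ζ) = ((1+ζ)(7+ζ²)/(3π)) · E(2√ζ/(1+ζ)) − ((1+ζ)(1−ζ)²/(3π)) · K(2√ζ/(1+ζ)). -/
open Real

/-- `L₀(ζ) = (1/π) ∫₀^π √(1 + ζ² + 2ζ cos θ) (1 + ζ cos θ) dθ`. -/
noncomputable def L0 (ζ : ℝ) : ℝ :=
  (1 / π) * ∫ θ in (0:ℝ)..π, Real.sqrt (1 + ζ ^ 2 + 2 * ζ * Real.cos θ) * (1 + ζ * Real.cos θ)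

/-- The complete elliptic integral of the first kind. -/
noncomputable def ellK (k : ℝ) : ℝ :=
  ∫ θ in (0:ℝ)..(π / 2), (Real.sqrt (1 - k ^ 2 * Real.sin θ ^ 2))⁻¹

/-- The complete elliptic integral of the second kind. -/
noncomputable def ellE (k : ℝ) : ℝ :=
  ∫ θ in (0:ℝ)..(π / 2), Real.sqrt (1 - k ^ 2 * Real.sin θ ^ 2)

/-!
After the half-angle substitution `θ = 2u`, the identity
`1 + ζ² + 2ζ cos 2u = (1 + ζ)² (1 - k² sin² u)` with `k = 2√ζ / (1 + ζ)` turns the integrand of `L₀`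
into a combination of `Δ` and `Δ³`, where `Δ(u) = √(1 - k² sin² u)`. The integral of `Δ` is `E(k)`,
and Legendre's reduction, the derivative of `k² sin u cos u Δ(u)` being
`3Δ³ + (2k² - 4)Δ + (1 - k²)/Δ`, expresses `∫₀^{π/2} Δ³` through `E(k)` and `K(k)`.
-/

open intervalIntegral

noncomputable def ellDelta (k u : ℝ) : ℝ := √(1 - k ^ 2 * sin u ^ 2)

lemma ellE_eq_integral_ellDelta (k : ℝ) : ellE k = ∫ u in 0..π / 2, ellDelta k u := rfl

lemma ellK_eq_integral_inv_ellDelta (k : ℝ) : ellK k = ∫ u in 0..π / 2, (ellDelta k u)⁻¹ := rfl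

lemma continuous_ellDelta (k : ℝ) : Continuous (ellDelta k) := by
  unfold ellDelta; fun_prop

lemma one_sub_sq_mul_sin_sq_nonneg {k : ℝ} (hk : k ^ 2 ≤ 1) (u : ℝ) :
    0 ≤ 1 - k ^ 2 * sin u ^ 2 := by
  nlinarith [sin_sq_le_one u, sq_nonneg k, sq_nonneg (sin u)]

lemma one_sub_sq_mul_sin_sq_pos {k : ℝ} (hk : k ^ 2 < 1) (u : ℝ) :
    0 < 1 - k ^ 2 * sin u ^ 2 := by
  nlinarith [sin_sq_le_one u, sq_nonneg k, sq_nonneg (sin u)]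

lemma ellDelta_sq {k : ℝ} (hk : k ^ 2 ≤ 1) (u : ℝ) :
    ellDelta k u ^ 2 = 1 - k ^ 2 * sin u ^ 2 :=
  sq_sqrt (one_sub_sq_mul_sin_sq_nonneg hk u)

lemma ellDelta_pos {k : ℝ} (hk : k ^ 2 < 1) (u : ℝ) : 0 < ellDelta k u :=
  sqrt_pos.2 (one_sub_sq_mul_sin_sq_pos hk u)

lemma hasDerivAt_sq_mul_sin_mul_cos_mul_ellDelta {k : ℝ} (hk : k ^ 2 < 1) (u : ℝ) :
    HasDerivAt (fun u => k ^ 2 * sin u * cos u * ellDelta k u)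
      (3 * ellDelta k u ^ 3 + (2 * k ^ 2 - 4) * ellDelta k u + (1 - k ^ 2) * (ellDelta k u)⁻¹)
      u := by
  have hw := one_sub_sq_mul_sin_sq_pos hk u
  have hΔ : HasDerivAt (ellDelta k) (-(k ^ 2 * (2 * sin u * cos u)) / (2 * ellDelta k u)) u := by
    have hs : HasDerivAt (fun u => sin u ^ 2) (2 * sin u * cos u) u := by
      simpa using (hasDerivAt_sin u).fun_pow 2
    exact ((hs.const_mul (k ^ 2)).const_sub 1).sqrt hw.ne'
  have hprod : HasDerivAt (fun u => k ^ 2 * sin u * cos u * ellDelta k u) _ u :=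
    (((hasDerivAt_sin u).const_mul (k ^ 2)).fun_mul (hasDerivAt_cos u)).fun_mul hΔ
  convert hprod using 1
  have hsq := ellDelta_sq hk.le u
  have hpos := (ellDelta_pos hk u).ne'
  field_simp
  linear_combination (3 * (ellDelta k u ^ 2 + 1 - k ^ 2 * sin u ^ 2) + 2 * k ^ 2 - 4
    - k ^ 2 * (cos u ^ 2 - sin u ^ 2)) * hsq - k ^ 2 * (1 - 2 * k ^ 2 * sin u ^ 2) * sin_sq_add_cos_sq u

lemma integral_ellDelta_pow_three_of_sq_lt_one {k : ℝ} (hk : k ^ 2 < 1) :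
    ∫ u in 0..π / 2, ellDelta k u ^ 3 = ((4 - 2 * k ^ 2) * ellE k - (1 - k ^ 2) * ellK k) / 3 := by
  have hΔ := continuous_ellDelta k
  have hΔinv : Continuous fun u => (ellDelta k u)⁻¹ :=
    hΔ.inv₀ fun u => (ellDelta_pos hk u).ne'
  have hint : ∀ f : ℝ → ℝ, Continuous f → IntervalIntegrable f MeasureTheory.volume 0 (π / 2) :=
    fun f hf => hf.intervalIntegrable _ _
  have hFTC := integral_eq_sub_of_hasDerivAt
    (fun u _ => hasDerivAt_sq_mul_sin_mul_cos_mul_ellDelta hk u)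
    (hint _ (by fun_prop))
  rw [integral_add (hint _ (by fun_prop)) (hint _ (by fun_prop)),
    integral_add (hint _ (by fun_prop)) (hint _ (by fun_prop)),
    integral_const_mul, integral_const_mul, integral_const_mul] at hFTC
  simp only [sin_zero, cos_pi_div_two, mul_zero, zero_mul, sub_zero] at hFTC
  rw [ellE_eq_integral_ellDelta, ellK_eq_integral_inv_ellDelta]
  linarith

lemma ellDelta_eq_cos {k : ℝ} (hk : k ^ 2 = 1) {u : ℝ} (hu : u ∈ Set.Icc (-(π / 2)) (π / 2)) :
    ellDelta k u = cos u := by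
  rw [ellDelta, hk, one_mul, ← cos_sq', sqrt_sq (cos_nonneg_of_mem_Icc hu)]

/-- At `k² = 1` the integrand of `ellK k` is not integrable, so `ellK k` is a junk value; it only
enters multiplied by `1 - k² = 0`. -/
lemma integral_ellDelta_pow_three_of_sq_eq_one {k : ℝ} (hk : k ^ 2 = 1) :
    ∫ u in 0..π / 2, ellDelta k u ^ 3 = ((4 - 2 * k ^ 2) * ellE k - (1 - k ^ 2) * ellK k) / 3 := by
  have hcos : Set.EqOn (ellDelta k) cos (Set.uIcc 0 (π / 2)) := fun u hu => by
    rw [Set.uIcc_of_le pi_div_two_pos.le] at hu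
    exact ellDelta_eq_cos hk ⟨by linarith [hu.1, pi_div_two_pos], hu.2⟩
  have hE : ellE k = 1 := by
    simp [ellE_eq_integral_ellDelta, integral_congr hcos]
  rw [integral_congr fun u hu => congrArg (· ^ 3) (hcos hu), hE, hk]
  norm_num

lemma integral_ellDelta_pow_three {k : ℝ} (hk : k ^ 2 ≤ 1) :
    ∫ u in 0..π / 2, ellDelta k u ^ 3 = ((4 - 2 * k ^ 2) * ellE k - (1 - k ^ 2) * ellK k) / 3 :=
  hk.lt_or_eq.elim integral_ellDelta_pow_three_of_sq_lt_one integral_ellDelta_pow_three_of_sq_eq_one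

lemma integral_zero_pi_eq_two_mul_integral_comp_two_mul (f : ℝ → ℝ) :
    ∫ θ in 0..π, f θ = 2 * ∫ u in 0..π / 2, f (2 * u) := by
  rw [integral_comp_mul_left f two_ne_zero, mul_zero, mul_div_cancel₀ π two_ne_zero, smul_eq_mul,
    mul_inv_cancel_left₀ two_ne_zero]

section HalfAngle

variable {ζ k : ℝ}

lemma sq_le_one_of_sq_mul_sq_eq (hζ : 0 < 1 + ζ) (hk : k ^ 2 * (1 + ζ) ^ 2 = 4 * ζ) :
    k ^ 2 ≤ 1 := by
  nlinarith [sq_nonneg (1 - ζ), pow_pos hζ 2]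

lemma one_add_sq_add_two_mul_cos_two_mul (hk : k ^ 2 * (1 + ζ) ^ 2 = 4 * ζ) (u : ℝ) :
    1 + ζ ^ 2 + 2 * ζ * cos (2 * u) = (1 + ζ) ^ 2 * (1 - k ^ 2 * sin u ^ 2) := by
  rw [cos_two_mul, cos_sq']
  linear_combination sin u ^ 2 * hk

lemma L0_integrand_two_mul (hζ : 0 < 1 + ζ) (hk : k ^ 2 * (1 + ζ) ^ 2 = 4 * ζ) (u : ℝ) :
    √(1 + ζ ^ 2 + 2 * ζ * cos (2 * u)) * (1 + ζ * cos (2 * u))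
      = (1 + ζ) * ((1 + ζ - (1 + ζ) ^ 2 / 2) * ellDelta k u
        + (1 + ζ) ^ 2 / 2 * ellDelta k u ^ 3) := by
  have hsq := ellDelta_sq (sq_le_one_of_sq_mul_sq_eq hζ hk) u
  rw [one_add_sq_add_two_mul_cos_two_mul hk, sqrt_mul (sq_nonneg _), sqrt_sq hζ.le, ← ellDelta,
    cos_two_mul, cos_sq']
  linear_combination (1 + ζ) * ellDelta k u * (sin u ^ 2 / 2 * hk - (1 + ζ) ^ 2 / 2 * hsq)

lemma L0_eq_of_sq_mul_sq_eq (hζ : 0 < 1 + ζ) (hk : k ^ 2 * (1 + ζ) ^ 2 = 4 * ζ) :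
    L0 ζ = (1 + ζ) * (7 + ζ ^ 2) / (3 * π) * ellE k - (1 + ζ) * (1 - ζ) ^ 2 / (3 * π) * ellK k := by
  have hΔ : Continuous (ellDelta k) := continuous_ellDelta k
  have hΔ3 : Continuous fun u => ellDelta k u ^ 3 := hΔ.pow 3
  rw [L0, integral_zero_pi_eq_two_mul_integral_comp_two_mul,
    integral_congr fun u _ => L0_integrand_two_mul hζ hk u, integral_const_mul,
    integral_add ((hΔ.intervalIntegrable _ _).const_mul _) ((hΔ3.intervalIntegrable _ _).const_mul _),
    integral_const_mul, integral_const_mul, ← ellE_eq_integral_ellDelta,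
    integral_ellDelta_pow_three (sq_le_one_of_sq_mul_sq_eq hζ hk)]
  field_simp
  linear_combination (ellK k - 2 * ellE k) * hk

end HalfAngle

theorem stmt_3 (ζ : ℝ) (hζ : 0 < ζ) :
    L0 ζ = ((1 + ζ) * (7 + ζ ^ 2) / (3 * π)) * ellE (2 * Real.sqrt ζ / (1 + ζ))
      - ((1 + ζ) * (1 - ζ) ^ 2 / (3 * π)) * ellK (2 * Real.sqrt ζ / (1 + ζ)) := by
  refine L0_eq_of_sq_mul_sq_eq (by linarith) ?_
  rw [div_pow, mul_pow, sq_sqrt hζ.le, div_mul_cancel₀ _ (by positivity)]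
  ring
end

section
/- For every ζ > 0 with ζ ≠ 1, the identity (ζ/π) · ∫₀^π √(1 + ζ² + 2ζ cos θ) · cos θ dθ = ((1+ζ²)/(6π)) · ∫₀^π √(1 + ζ² + 2ζ cos θ) dθ − ((1+ζ)²(1−ζ)²/(6π√(1+ζ²))) · ∫₀^π (1 + (2ζ/(1+ζ²)) cos θ)^{−1/2} dθ holds. -/
/-!
With `u θ = a + b cos θ`, differentiating `2 b sin θ √u` and eliminating `sin² θ` and `cos θ`
through `u` gives `3 b cos θ √u - a √u + (a² - b²) / √u`; its integral over `[0, π]` vanishes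
since `sin` does at both ends. For `a = 1 + ζ²`, `b = 2ζ` this is the claimed identity, once
`1 + (b / a) cos θ = u / a` is used in the last integral.
-/

open Real

namespace Real

lemma add_mul_cos_pos {a b : ℝ} (hab : |b| < a) (θ : ℝ) : 0 < a + b * cos θ := by
  have : |b * cos θ| ≤ |b| := by
    rw [abs_mul]
    exact mul_le_of_le_one_right (abs_nonneg b) (abs_cos_le_one θ)
  linarith [neg_abs_le (b * cos θ)]

lemma hasDerivAt_sin_mul_sqrt_add_mul_cos {a b θ : ℝ} (hu : 0 < a + b * cos θ) :
    HasDerivAt (fun t => 2 * b * (sin t * √(a + b * cos t)))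
      (3 * b * (√(a + b * cos θ) * cos θ) - a * √(a + b * cos θ)
        + (a ^ 2 - b ^ 2) * (√(a + b * cos θ))⁻¹) θ := by
  have hu' : HasDerivAt (fun t => a + b * cos t) (b * -sin θ) θ :=
    ((hasDerivAt_cos θ).const_mul b).const_add a
  refine (((hasDerivAt_sin θ).mul (hu'.sqrt hu.ne')).const_mul (2 * b)).congr_deriv ?_
  have hsq := sq_sqrt hu.le
  have hs : √(a + b * cos θ) ≠ 0 := (sqrt_pos.mpr hu).ne'
  field_simp
  linear_combination (a - b * cos θ) * hsq - b ^ 2 * sin_sq_add_cos_sq θ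

theorem three_mul_integral_sqrt_add_mul_cos_mul_cos {a b : ℝ} (hab : |b| < a) :
    3 * b * ∫ θ in (0:ℝ)..π, √(a + b * cos θ) * cos θ
      = a * (∫ θ in (0:ℝ)..π, √(a + b * cos θ))
        - (a ^ 2 - b ^ 2) * ∫ θ in (0:ℝ)..π, (√(a + b * cos θ))⁻¹ := by
  have hu := add_mul_cos_pos hab
  have hsqrt : Continuous fun θ => √(a + b * cos θ) := by fun_prop
  have hinv : Continuous fun θ => (√(a + b * cos θ))⁻¹ :=
    hsqrt.inv₀ fun θ => (sqrt_pos.mpr (hu θ)).ne'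
  have i₁ : IntervalIntegrable (fun θ => √(a + b * cos θ) * cos θ) MeasureTheory.volume 0 π :=
    (hsqrt.mul continuous_cos).intervalIntegrable 0 π
  have i₂ := hsqrt.intervalIntegrable (μ := MeasureTheory.volume) 0 π
  have i₃ := hinv.intervalIntegrable (μ := MeasureTheory.volume) 0 π
  have hFTC := intervalIntegral.integral_eq_sub_of_hasDerivAt
    (fun θ _ => hasDerivAt_sin_mul_sqrt_add_mul_cos (hu θ))
    (((i₁.const_mul _).sub (i₂.const_mul _)).add (i₃.const_mul _))
  rw [intervalIntegral.integral_add ((i₁.const_mul _).sub (i₂.const_mul _)) (i₃.const_mul _),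
    intervalIntegral.integral_sub (i₁.const_mul _) (i₂.const_mul _),
    intervalIntegral.integral_const_mul, intervalIntegral.integral_const_mul,
    intervalIntegral.integral_const_mul, sin_pi, sin_zero] at hFTC
  linear_combination hFTC

lemma inv_sqrt_one_add_div_mul {a : ℝ} (ha : 0 < a) (b c : ℝ) :
    (√(1 + b / a * c))⁻¹ = √a * (√(a + b * c))⁻¹ := by
  have : 1 + b / a * c = (a + b * c) / a := by field_simp
  rw [this, sqrt_div' _ ha.le, inv_div, div_eq_mul_inv]

end Real

theorem stmt_6 (ζ : ℝ) (hζ : 0 < ζ) (hζ1 : ζ ≠ 1) :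
    (ζ / π) * ∫ θ in (0:ℝ)..π, Real.sqrt (1 + ζ ^ 2 + 2 * ζ * Real.cos θ) * Real.cos θ
      = ((1 + ζ ^ 2) / (6 * π)) * (∫ θ in (0:ℝ)..π, Real.sqrt (1 + ζ ^ 2 + 2 * ζ * Real.cos θ))
        - ((1 + ζ) ^ 2 * (1 - ζ) ^ 2 / (6 * π * Real.sqrt (1 + ζ ^ 2)))
            * ∫ θ in (0:ℝ)..π, (Real.sqrt (1 + (2 * ζ / (1 + ζ ^ 2)) * Real.cos θ))⁻¹ := by
  have ha : 0 < 1 + ζ ^ 2 := by positivity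
  have hab : |2 * ζ| < 1 + ζ ^ 2 := by
    rw [abs_of_pos (by positivity)]
    nlinarith [sq_pos_of_ne_zero (sub_ne_zero.mpr hζ1)]
  have key := three_mul_integral_sqrt_add_mul_cos_mul_cos hab
  simp_rw [inv_sqrt_one_add_div_mul ha, intervalIntegral.integral_const_mul]
  generalize (∫ θ in (0:ℝ)..π, √(1 + ζ ^ 2 + 2 * ζ * cos θ) * cos θ) = I₁ at key ⊢
  generalize (∫ θ in (0:ℝ)..π, √(1 + ζ ^ 2 + 2 * ζ * cos θ)) = I₂ at key ⊢
  generalize (∫ θ in (0:ℝ)..π, (√(1 + ζ ^ 2 + 2 * ζ * cos θ))⁻¹) = I₃ at key ⊢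
  have hs : √(1 + ζ ^ 2) ≠ 0 := (sqrt_pos.mpr ha).ne'
  field_simp
  linear_combination key
end

section
/- There exist constants C > 0 and ζ₁ ≥ 1 such that for every ζ ≥ ζ₁, |L₀(ζ) − (3/2)·ζ| ≤ C/ζ; in particular L₀(ζ) = (3/2)ζ + O(ζ^{−1}) as ζ → ∞. -/
/-!
For `ζ ≥ 2` and `|c| ≤ 1` the square root `√(1 + ζ² + 2ζc)` equals its expansion
`ζ + c + (1 - c²)/(2ζ)` up to `ζ⁻²`. Since the factor `1 + ζ cos θ` is `O(ζ)`, replacing the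
square root in the integrand of `L₀` by this expansion costs `O(ζ⁻¹)` uniformly in `θ`, and the
expanded integrand is a trigonometric polynomial with integral `π (3ζ/2 + 1/(4ζ))` over `[0, π]`.
-/

open Real

noncomputable def sqrtExpansion (ζ c : ℝ) : ℝ := ζ + c + (1 - c ^ 2) / (2 * ζ)

lemma abs_sqrt_sub_sqrtExpansion_le {ζ c : ℝ} (hζ : 2 ≤ ζ) (hc : |c| ≤ 1) :
    |√(1 + ζ ^ 2 + 2 * ζ * c) - sqrtExpansion ζ c| ≤ 1 / ζ ^ 2 := by
  obtain ⟨hc₁, hc₂⟩ := abs_le.mp hc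
  set s := √(1 + ζ ^ 2 + 2 * ζ * c)
  have hs_sq : s ^ 2 = 1 + ζ ^ 2 + 2 * ζ * c := sq_sqrt (by nlinarith)
  have hs_lower : ζ - 1 ≤ s := le_sqrt_of_sq_le (by nlinarith)
  have hs_upper : s ≤ ζ + 1 := sqrt_le_iff.mpr ⟨by linarith, by nlinarith⟩
  have hden : ζ ≤ s + (ζ + c) := by linarith
  have hden_pos : 0 < 2 * ζ * (s + (ζ + c)) := mul_pos (by positivity) (by linarith)
  -- rationalising `s - (ζ + c)` against `s + (ζ + c)` isolates the second-order error
  have herr : s - sqrtExpansion ζ c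
      = (1 - c ^ 2) * (ζ - c - s) / (2 * ζ * (s + (ζ + c))) := by
    rw [sqrtExpansion, eq_div_iff hden_pos.ne']
    field_simp
    linear_combination (2 * ζ) * hs_sq
  rw [herr, abs_div, abs_mul, abs_of_nonneg (by nlinarith : 0 ≤ 1 - c ^ 2),
    abs_of_pos hden_pos, div_le_div_iff₀ hden_pos (by positivity)]
  have h2 : |ζ - c - s| ≤ 2 := abs_le.mpr ⟨by linarith, by linarith⟩
  calc (1 - c ^ 2) * |ζ - c - s| * ζ ^ 2 ≤ 1 * 2 * ζ ^ 2 := by gcongr; nlinarith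
    _ ≤ 1 * (2 * ζ * (s + (ζ + c))) := by nlinarith

lemma abs_integral_sub_sqrtExpansion_le {ζ : ℝ} (hζ : 2 ≤ ζ) :
    |∫ θ in (0:ℝ)..π, (√(1 + ζ ^ 2 + 2 * ζ * cos θ) * (1 + ζ * cos θ)
        - sqrtExpansion ζ (cos θ) * (1 + ζ * cos θ))| ≤ 2 / ζ * π := by
  have hpointwise : ∀ θ, ‖√(1 + ζ ^ 2 + 2 * ζ * cos θ) * (1 + ζ * cos θ)
      - sqrtExpansion ζ (cos θ) * (1 + ζ * cos θ)‖ ≤ 2 / ζ := by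
    intro θ
    have hcos : |cos θ| ≤ 1 := abs_cos_le_one θ
    have hfactor : |1 + ζ * cos θ| ≤ 2 * ζ := by
      obtain ⟨hc₁, hc₂⟩ := abs_le.mp hcos
      exact abs_le.mpr ⟨by nlinarith, by nlinarith⟩
    rw [Real.norm_eq_abs, ← sub_mul, abs_mul]
    calc _ ≤ 1 / ζ ^ 2 * (2 * ζ) :=
          mul_le_mul (abs_sqrt_sub_sqrtExpansion_le hζ hcos) hfactor (abs_nonneg _) (by positivity)
      _ = 2 / ζ := by field_simp
  simpa [abs_of_pos pi_pos] using
    intervalIntegral.norm_integral_le_of_norm_le_const (a := 0) (b := π) (fun θ _ => hpointwise θ)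

lemma integral_sqrtExpansion_mul {ζ : ℝ} (hζ : ζ ≠ 0) :
    ∫ θ in (0:ℝ)..π, sqrtExpansion ζ (cos θ) * (1 + ζ * cos θ)
      = π * (3 / 2 * ζ + 1 / (4 * ζ)) := by
  have hexpand : ∀ θ, sqrtExpansion ζ (cos θ) * (1 + ζ * cos θ)
      = ζ + (1 + ζ ^ 2) * cos θ + ζ * cos θ ^ 2 + sin θ ^ 2 / (2 * ζ)
        + sin θ ^ 2 * cos θ / 2 := by
    intro θ
    rw [sqrtExpansion, sin_sq]
    field_simp
    ring
  simp only [hexpand]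
  repeat rw [intervalIntegral.integral_add]
  · simp only [intervalIntegral.integral_const, intervalIntegral.integral_const_mul,
      intervalIntegral.integral_div, integral_cos, integral_cos_sq, integral_sin_sq,
      integral_sin_sq_mul_cos, sin_pi, sin_zero, cos_pi, cos_zero]
    field_simp
    ring
  all_goals exact Continuous.intervalIntegrable (by fun_prop) _ _

lemma L0_sub_three_halves_mul_eq {ζ : ℝ} (hζ : ζ ≠ 0) :
    L0 ζ - 3 / 2 * ζ = π⁻¹ * (∫ θ in (0:ℝ)..π, (√(1 + ζ ^ 2 + 2 * ζ * cos θ) * (1 + ζ * cos θ)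
        - sqrtExpansion ζ (cos θ) * (1 + ζ * cos θ))) + 1 / (4 * ζ) := by
  rw [intervalIntegral.integral_sub (Continuous.intervalIntegrable (by fun_prop) _ _)
    (Continuous.intervalIntegrable (by unfold sqrtExpansion; fun_prop) _ _),
    integral_sqrtExpansion_mul hζ, L0]
  field_simp
  ring

theorem stmt_10 :
    ∃ C > (0:ℝ), ∃ ζ₁ : ℝ, 1 ≤ ζ₁ ∧ ∀ ζ : ℝ, ζ₁ ≤ ζ →
      |L0 ζ - (3 / 2) * ζ| ≤ C / ζ := by
  refine ⟨9 / 4, by norm_num, 2, by norm_num, fun ζ hζ => ?_⟩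
  have hζ_pos : 0 < ζ := by linarith
  rw [L0_sub_three_halves_mul_eq hζ_pos.ne']
  set I := ∫ θ in (0:ℝ)..π, (√(1 + ζ ^ 2 + 2 * ζ * cos θ) * (1 + ζ * cos θ)
    - sqrtExpansion ζ (cos θ) * (1 + ζ * cos θ))
  have hI : |I| ≤ 2 / ζ * π := abs_integral_sub_sqrtExpansion_le hζ
  calc |π⁻¹ * I + 1 / (4 * ζ)| ≤ π⁻¹ * |I| + 1 / (4 * ζ) := by
        refine (abs_add_le _ _).trans_eq ?_
        rw [abs_mul, abs_of_pos (inv_pos.mpr pi_pos), abs_of_pos (by positivity : 0 < 1 / (4 * ζ))]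
    _ ≤ π⁻¹ * (2 / ζ * π) + 1 / (4 * ζ) := by gcongr
    _ = 9 / 4 / ζ := by field_simp; ring
end

section
/- There exists a constant C > 0 such that for every ζ > 0, |L₀(ζ)| ≤ C · √(1 + ζ²), i.e. |L₀(ζ)| ≲ ⟨ζ⟩ where ⟨ζ⟩ = (1 + ζ²)^{1/2}. -/
/-!
Pairing `θ` with `π - θ` replaces `cos θ` by `-cos θ`, so with `x = 1 + ζ²`, `s = ζ cos θ`,
`p = √(x + 2s)`, `q = √(x - 2s)` the symmetrised integrand is `(p + q) + s (p - q)`.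
Here `p + q ≍ √x`, and `s (p - q) = 4 s² / (p + q) ≲ √x` since `s² ≤ x`: the leading terms
of size `ζ²` cancel.
-/

open Real

open MeasureTheory

theorem intervalIntegral.integral_add_comp_sub_eq_two_smul {E : Type*} [NormedAddCommGroup E]
    [NormedSpace ℝ E] {f : ℝ → E} {a b : ℝ} (hf : IntervalIntegrable f volume a b) :
    ∫ x in a..b, (f x + f (a + b - x)) = (2 : ℝ) • ∫ x in a..b, f x := by
  have hreflect : IntervalIntegrable (fun x ↦ f (a + b - x)) volume a b := by
    simpa using (hf.comp_sub_left (a + b)).symm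
  rw [intervalIntegral.integral_add hf hreflect, intervalIntegral.integral_comp_sub_left,
    add_sub_cancel_right, add_sub_cancel_left, two_smul]

lemma abs_sqrt_add_mul_add_sqrt_sub_mul_le {x s : ℝ} (hpos : 0 ≤ x + 2 * s)
    (hneg : 0 ≤ x - 2 * s) (hs : s ^ 2 ≤ x) :
    |√(x + 2 * s) * (1 + s) + √(x - 2 * s) * (1 - s)| ≤ 6 * √x := by
  obtain rfl | hx := (show 0 ≤ x by linarith).eq_or_lt
  · obtain rfl : s = 0 := by nlinarith
    simp
  set p := √(x + 2 * s)
  set q := √(x - 2 * s)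
  set r := √x
  have hp : 0 ≤ p := sqrt_nonneg _
  have hq : 0 ≤ q := sqrt_nonneg _
  have hr : 0 < r := sqrt_pos.2 hx
  have hp2 : p ^ 2 = x + 2 * s := sq_sqrt hpos
  have hq2 : q ^ 2 = x - 2 * s := sq_sqrt hneg
  have hr2 : r ^ 2 = x := sq_sqrt hx.le
  have hsum_le : p + q ≤ 2 * r := by nlinarith [sq_nonneg (p - q)]
  have hsum_ge : r ≤ p + q := by nlinarith [mul_nonneg hp hq]
  have hcross : s * (p - q) * (p + q) = 4 * s ^ 2 := by linear_combination s * (hp2 - hq2)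
  have hcross_nonneg : 0 ≤ s * (p - q) :=
    nonneg_of_mul_nonneg_left (hcross ▸ by positivity) (hr.trans_le hsum_ge)
  have hcross_le : s * (p - q) ≤ 4 * r := by
    nlinarith [mul_le_mul_of_nonneg_left hsum_ge hcross_nonneg]
  rw [abs_of_nonneg (by nlinarith)]
  nlinarith

noncomputable def l0Integrand (ζ θ : ℝ) : ℝ :=
  √(1 + ζ ^ 2 + 2 * ζ * cos θ) * (1 + ζ * cos θ)

lemma L0_eq_integral_l0Integrand (ζ : ℝ) : L0 ζ = (1 / π) * ∫ θ in 0..π, l0Integrand ζ θ := rfl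

lemma continuous_l0Integrand (ζ : ℝ) : Continuous (l0Integrand ζ) := by
  unfold l0Integrand
  fun_prop

lemma abs_l0Integrand_add_l0Integrand_pi_sub_le (ζ θ : ℝ) :
    |l0Integrand ζ θ + l0Integrand ζ (π - θ)| ≤ 6 * √(1 + ζ ^ 2) := by
  have hpos : 0 ≤ 1 + ζ ^ 2 + 2 * (ζ * cos θ) := by
    nlinarith [sq_nonneg (ζ + cos θ), sin_sq_add_cos_sq θ]
  have hneg : 0 ≤ 1 + ζ ^ 2 - 2 * (ζ * cos θ) := by
    nlinarith [sq_nonneg (ζ - cos θ), sin_sq_add_cos_sq θ]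
  have hs : (ζ * cos θ) ^ 2 ≤ 1 + ζ ^ 2 := by
    nlinarith [mul_le_mul_of_nonneg_left (cos_sq_le_one θ) (sq_nonneg ζ)]
  convert abs_sqrt_add_mul_add_sqrt_sub_mul_le hpos hneg hs using 3 <;>
    simp only [l0Integrand, cos_pi_sub] <;> ring_nf

theorem stmt_11 :
    ∃ C > (0:ℝ), ∀ ζ : ℝ, 0 < ζ → |L0 ζ| ≤ C * Real.sqrt (1 + ζ ^ 2) := by
  refine ⟨3, by norm_num, fun ζ _ ↦ ?_⟩
  have hsymm := intervalIntegral.integral_add_comp_sub_eq_two_smul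
    ((continuous_l0Integrand ζ).intervalIntegrable 0 π)
  rw [zero_add] at hsymm
  have hbound := intervalIntegral.norm_integral_le_of_norm_le_const
    (f := fun θ ↦ l0Integrand ζ θ + l0Integrand ζ (π - θ)) (a := 0) (b := π)
    fun θ _ ↦ (norm_eq_abs _).trans_le (abs_l0Integrand_add_l0Integrand_pi_sub_le ζ θ)
  rw [hsymm, norm_smul, Real.norm_two, norm_eq_abs, sub_zero, abs_of_pos pi_pos] at hbound
  rw [L0_eq_integral_l0Integrand, abs_mul, abs_of_pos (by positivity)]
  calc 1 / π * |∫ θ in 0..π, l0Integrand ζ θ| ≤ 1 / π * (6 * √(1 + ζ ^ 2) * π / 2) := by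
        gcongr; linarith
    _ = 3 * √(1 + ζ ^ 2) := by field_simp; ring
end

section
/- For every ζ > 0, L₀(ζ) − ζ·L₀(1/ζ) = (4(ζ²−1)/π) · ∫₀^{π/2} cos²θ / (√(1 + ζ² + 2ζ cos θ) + √(1 + ζ² − 2ζ cos θ)) dθ. -/
open Real

/-!
Since `√(1 + ζ⁻² + 2ζ⁻¹ cos θ) = √(1 + ζ² + 2ζ cos θ) / ζ`, both terms are integrals of the same
square root, and the difference collapses to `(ζ - 1/ζ)/π · ∫₀^π √(1 + ζ² + 2ζ cos θ) cos θ dθ`.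
Folding `[π/2, π]` onto `[0, π/2]` by `θ ↦ π - θ` turns this into an integral of `(√A - √B) cos θ`
with `A - B = 4ζ cos θ`, and rationalizing `√A - √B = (A - B)/(√A + √B)` gives the claim.
-/

open intervalIntegral

theorem Real.sqrt_sub_sqrt_eq_div {a b : ℝ} (ha : 0 ≤ a) (hb : 0 ≤ b) :
    √a - √b = (a - b) / (√a + √b) := by
  by_cases h : √a + √b = 0
  · have hsa : √a = 0 := by linarith [sqrt_nonneg a, sqrt_nonneg b]
    have hsb : √b = 0 := by linarith [sqrt_nonneg a, sqrt_nonneg b]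
    rw [sqrt_eq_zero ha] at hsa
    rw [sqrt_eq_zero hb] at hsb
    simp [hsa, hsb]
  · rw [eq_div_iff h]
    linear_combination sq_sqrt ha - sq_sqrt hb

theorem integral_comp_cos_zero_pi {g : ℝ → ℝ} (hg : Continuous g) :
    ∫ θ in 0..π, g (cos θ) = ∫ θ in 0..π / 2, (g (cos θ) + g (-cos θ)) := by
  have hint (a b : ℝ) : IntervalIntegrable (fun θ ↦ g (cos θ)) MeasureTheory.volume a b :=
    (hg.comp continuous_cos).intervalIntegrable a b
  have hint_neg : IntervalIntegrable (fun θ ↦ g (-cos θ)) MeasureTheory.volume 0 (π / 2) :=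
    (hg.comp continuous_cos.neg).intervalIntegrable 0 (π / 2)
  rw [← integral_add_adjacent_intervals (hint 0 (π / 2)) (hint (π / 2) π),
    integral_add (hint 0 (π / 2)) hint_neg]
  have hreflect := integral_comp_sub_left (fun θ ↦ g (cos θ)) π (a := 0) (b := π / 2)
  simp only [cos_pi_sub, sub_zero] at hreflect
  rw [hreflect, show π - π / 2 = π / 2 by ring]

theorem one_add_sq_add_two_mul_cos_nonneg (ζ θ : ℝ) : 0 ≤ 1 + ζ ^ 2 + 2 * ζ * cos θ := by
  nlinarith [sq_nonneg (ζ + cos θ), cos_sq_le_one θ]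

theorem one_add_sq_sub_two_mul_cos_nonneg (ζ θ : ℝ) : 0 ≤ 1 + ζ ^ 2 - 2 * ζ * cos θ := by
  nlinarith [sq_nonneg (ζ - cos θ), cos_sq_le_one θ]

theorem sqrt_one_add_one_div_sq {ζ : ℝ} (hζ : 0 < ζ) (c : ℝ) :
    √(1 + (1 / ζ) ^ 2 + 2 * (1 / ζ) * c) = √(1 + ζ ^ 2 + 2 * ζ * c) / ζ := by
  rw [show 1 + (1 / ζ) ^ 2 + 2 * (1 / ζ) * c = (1 + ζ ^ 2 + 2 * ζ * c) / ζ ^ 2 by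
    field_simp; ring, sqrt_div' _ (sq_nonneg ζ), sqrt_sq hζ.le]

theorem L0_sub_mul_L0_one_div {ζ : ℝ} (hζ : 0 < ζ) :
    L0 ζ - ζ * L0 (1 / ζ) =
      (ζ - 1 / ζ) / π * ∫ θ in 0..π, √(1 + ζ ^ 2 + 2 * ζ * cos θ) * cos θ := by
  have hcont : Continuous fun θ ↦ √(1 + ζ ^ 2 + 2 * ζ * cos θ) := by fun_prop
  have hscaled : ζ * L0 (1 / ζ) =
      1 / π * ∫ θ in 0..π, √(1 + ζ ^ 2 + 2 * ζ * cos θ) * (1 + 1 / ζ * cos θ) := by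
    unfold L0
    rw [mul_left_comm, ← integral_const_mul]
    congr 1
    refine integral_congr fun θ _ ↦ ?_
    simp only [sqrt_one_add_one_div_sq hζ]
    field_simp
  rw [hscaled, L0, ← mul_sub, ← integral_sub, ← integral_const_mul, ← integral_const_mul]
  · refine integral_congr fun θ _ ↦ ?_
    ring
  all_goals exact (hcont.mul (by fun_prop)).intervalIntegrable _ _

theorem stmt_12 (ζ : ℝ) (hζ : 0 < ζ) :
    L0 ζ - ζ * L0 (1 / ζ)
      = (4 * (ζ ^ 2 - 1) / π) * ∫ θ in (0:ℝ)..(π / 2),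
          Real.cos θ ^ 2 / (Real.sqrt (1 + ζ ^ 2 + 2 * ζ * Real.cos θ)
            + Real.sqrt (1 + ζ ^ 2 - 2 * ζ * Real.cos θ)) := by
  rw [L0_sub_mul_L0_one_div hζ,
    integral_comp_cos_zero_pi (g := fun c ↦ √(1 + ζ ^ 2 + 2 * ζ * c) * c) (by fun_prop)]
  have hrationalize (θ : ℝ) :
      √(1 + ζ ^ 2 + 2 * ζ * cos θ) * cos θ + √(1 + ζ ^ 2 + 2 * ζ * -cos θ) * -cos θ =
        4 * ζ * (cos θ ^ 2 / (√(1 + ζ ^ 2 + 2 * ζ * cos θ) + √(1 + ζ ^ 2 - 2 * ζ * cos θ))) := by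
    rw [mul_neg, ← sub_eq_add_neg, ← sub_mul, mul_neg, ← sub_eq_add_neg,
      sqrt_sub_sqrt_eq_div (one_add_sq_add_two_mul_cos_nonneg ζ θ)
        (one_add_sq_sub_two_mul_cos_nonneg ζ θ)]
    ring
  simp only [hrationalize, integral_const_mul, ← mul_assoc]
  congr 1
  field_simp
end

section
/- For every ζ > 0, ∫₀^π |1 + ζ cos θ| / (1 + ζ² + 2ζ cos θ) dθ ≤ 2π/(1 + ζ). -/
/-!
Write `D = 1 + ζ² + 2ζ cos θ = |1 + ζ e^{iθ}|²`. For `ζ < 1` the integrand is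
`1 - d/dθ arg (1 + ζ e^{iθ})`, and the argument vanishes at `0` and `π`, so the integral is
exactly `π`. For `ζ > 1`, put `r = 1/ζ`: then `(1 + ζ cos θ) / D = d/dθ arg (1 + r e^{iθ})`,
which changes sign once, where `cos θ = -r`. The integral of its absolute value is therefore
twice the maximum of `arg (1 + r e^{iθ})`, which is `arcsin r ≤ π r / 2`, and
`π / ζ ≤ 2π / (1 + ζ)`. For `ζ = 1` the integrand is `1/2` away from `θ = π`.
-/

open Real Set intervalIntegral
open MeasureTheory (volume Measure)

/-- `arg (1 + r e^{iθ})` wherever `1 + r cos θ > 0`. -/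
noncomputable def onePlusArg (r θ : ℝ) : ℝ := arctan (r * sin θ / (1 + r * cos θ))

lemma one_add_sq_add_two_mul_cos_eq (r t : ℝ) :
    1 + r ^ 2 + 2 * r * cos t = (r + cos t) ^ 2 + sin t ^ 2 := by
  linear_combination -sin_sq_add_cos_sq t

lemma one_add_sq_add_two_mul_cos_pos {r : ℝ} (hr : r ^ 2 ≠ 1) (t : ℝ) :
    0 < 1 + r ^ 2 + 2 * r * cos t := by
  rw [one_add_sq_add_two_mul_cos_eq]
  refine (by positivity : (0 : ℝ) ≤ _).lt_of_ne fun h => hr ?_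
  have hsin : sin t = 0 := by nlinarith [sq_nonneg (r + cos t), sq_nonneg (sin t)]
  have hcos : r = -cos t := by nlinarith [sq_nonneg (r + cos t), sq_nonneg (sin t)]
  nlinarith [sin_sq_add_cos_sq t]

lemma hasDerivAt_onePlusArg {r t : ℝ} (h : 1 + r * cos t ≠ 0) :
    HasDerivAt (onePlusArg r) (r * (r + cos t) / (1 + r ^ 2 + 2 * r * cos t)) t := by
  have hquot : HasDerivAt (fun θ => r * sin θ / (1 + r * cos θ))
      ((r * cos t * (1 + r * cos t) - r * sin t * (r * -sin t)) / (1 + r * cos t) ^ 2) t :=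
    ((hasDerivAt_sin t).const_mul r).div (((hasDerivAt_cos t).const_mul r).const_add 1) h
  refine hquot.arctan.congr_deriv ?_
  have hD : 1 + r ^ 2 + 2 * r * cos t = (1 + r * cos t) ^ 2 + (r * sin t) ^ 2 := by
    linear_combination (-r ^ 2) * sin_sq_add_cos_sq t
  rw [hD]
  field_simp
  linear_combination r ^ 2 * sin_sq_add_cos_sq t

lemma onePlusArg_le_arcsin {r : ℝ} (hr0 : 0 ≤ r) (hr1 : r < 1) (θ : ℝ) :
    onePlusArg r θ ≤ arcsin r := by
  rw [onePlusArg, arcsin_eq_arctan ⟨by linarith, hr1⟩]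
  refine arctan_mono ?_
  set s := √(1 - r ^ 2)
  have hs : s ^ 2 = 1 - r ^ 2 := sq_sqrt (by nlinarith)
  have hs0 : 0 < s := sqrt_pos.2 (by nlinarith)
  have hc : 0 < 1 + r * cos θ := by nlinarith [neg_one_le_cos θ, cos_le_one θ]
  rw [div_le_div_iff₀ hc hs0]
  -- Cauchy–Schwarz for the unit vectors `(s, -r)` and `(sin θ, cos θ)`.
  have : s * sin θ ≤ 1 + r * cos θ := by
    nlinarith [sq_nonneg (s * cos θ + r * sin θ), sin_sq_add_cos_sq θ]
  nlinarith

lemma arcsin_le_pi_div_two_mul {x : ℝ} (h0 : 0 ≤ x) (h1 : x ≤ 1) :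
    arcsin x ≤ π / 2 * x := by
  have hjordan := mul_le_sin (arcsin_nonneg.2 h0) (arcsin_le_pi_div_two x)
  rw [sin_arcsin (by linarith) h1] at hjordan
  calc arcsin x = π / 2 * (2 / π * arcsin x) := by field_simp
    _ ≤ π / 2 * x := by gcongr

theorem integral_abs_eq_of_hasDerivAt_of_nonneg_of_nonpos {F f : ℝ → ℝ} {a b c : ℝ}
    (hac : a ≤ c) (hcb : c ≤ b) (hF : ∀ x ∈ Icc a b, HasDerivAt F (f x) x)
    (hf : IntervalIntegrable f volume a b)
    (hpos : ∀ x ∈ Icc a c, 0 ≤ f x) (hneg : ∀ x ∈ Icc c b, f x ≤ 0) :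
    ∫ x in a..b, |f x| = 2 * F c - F a - F b := by
  have hab : a ≤ b := hac.trans hcb
  have hc : c ∈ uIcc a b := mem_uIcc_of_le hac hcb
  have hsub_left : uIcc a c ⊆ uIcc a b := uIcc_subset_uIcc_left hc
  have hsub_right : uIcc c b ⊆ uIcc a b := uIcc_subset_uIcc_right hc
  have hF' : ∀ x ∈ uIcc a b, HasDerivAt F (f x) x := fun x hx => hF x (uIcc_of_le hab ▸ hx)
  have hleft : ∫ x in a..c, |f x| = F c - F a := by
    rw [integral_congr fun x hx => abs_of_nonneg (hpos x (uIcc_of_le hac ▸ hx))]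
    exact integral_eq_sub_of_hasDerivAt (fun x hx => hF' x (hsub_left hx))
      (hf.mono_set hsub_left)
  have hright : ∫ x in c..b, |f x| = F c - F b := by
    rw [integral_congr fun x hx => abs_of_nonpos (hneg x (uIcc_of_le hcb ▸ hx)), integral_neg,
      integral_eq_sub_of_hasDerivAt (fun x hx => hF' x (hsub_right hx)) (hf.mono_set hsub_right),
      neg_sub]
  rw [← integral_add_adjacent_intervals (hf.abs.mono_set hsub_left)
    (hf.abs.mono_set hsub_right), hleft, hright]
  ring

lemma one_add_mul_cos_div_eq_inv {ζ : ℝ} (hζ : ζ ≠ 0) (θ : ℝ) :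
    (1 + ζ * cos θ) / (1 + ζ ^ 2 + 2 * ζ * cos θ)
      = ζ⁻¹ * (ζ⁻¹ + cos θ) / (1 + ζ⁻¹ ^ 2 + 2 * ζ⁻¹ * cos θ) := by
  rw [← mul_div_mul_left _ _ (pow_ne_zero 2 (inv_ne_zero hζ))]
  congr 1 <;> field_simp; ring

lemma integral_abs_one_add_mul_cos_div_of_abs_lt_one {ζ : ℝ} (hζ : |ζ| < 1) :
    ∫ θ in (0 : ℝ)..π, |1 + ζ * cos θ| / (1 + ζ ^ 2 + 2 * ζ * cos θ) = π := by
  obtain ⟨hlo, hhi⟩ := abs_lt.1 hζ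
  have hD := one_add_sq_add_two_mul_cos_pos (r := ζ) (by nlinarith)
  have hnum : ∀ θ, 0 < 1 + ζ * cos θ := fun θ => by
    nlinarith [abs_cos_le_one θ, abs_nonneg ζ, abs_mul ζ (cos θ), neg_abs_le (ζ * cos θ)]
  have hderiv : ∀ θ ∈ uIcc 0 π, HasDerivAt (fun θ => θ - onePlusArg ζ θ)
      ((1 + ζ * cos θ) / (1 + ζ ^ 2 + 2 * ζ * cos θ)) θ := fun θ _ => by
    refine ((hasDerivAt_id θ).sub (hasDerivAt_onePlusArg (hnum θ).ne')).congr_deriv ?_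
    have hD0 := (hD θ).ne'
    rw [eq_div_iff hD0, sub_mul, div_mul_cancel₀ _ hD0]
    ring
  have hcont : Continuous fun θ => (1 + ζ * cos θ) / (1 + ζ ^ 2 + 2 * ζ * cos θ) :=
    (by fun_prop : Continuous _).div (by fun_prop) fun θ => (hD θ).ne'
  rw [integral_congr fun θ _ => by rw [abs_of_pos (hnum θ)],
    integral_eq_sub_of_hasDerivAt hderiv (hcont.intervalIntegrable 0 π)]
  simp [onePlusArg]

lemma integral_abs_one_add_cos_div :
    ∫ θ in (0 : ℝ)..π, |1 + 1 * cos θ| / (1 + 1 ^ 2 + 2 * 1 * cos θ) = π / 2 := by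
  have h : ∀ᵐ θ, θ ∈ uIoc 0 π →
      |1 + 1 * cos θ| / (1 + 1 ^ 2 + 2 * 1 * cos θ) = 1 / 2 := by
    filter_upwards [Measure.ae_ne volume π] with θ hne hθ
    rw [uIoc_of_le pi_pos.le] at hθ
    have hcos : cos π < cos θ :=
      cos_lt_cos_of_nonneg_of_le_pi hθ.1.le le_rfl (lt_of_le_of_ne hθ.2 hne)
    rw [cos_pi] at hcos
    rw [abs_of_pos (by linarith), div_eq_iff (by linarith)]
    ring
  rw [integral_congr_ae h, integral_const, smul_eq_mul]
  ring

lemma integral_abs_one_add_mul_cos_div_le_of_one_lt {ζ : ℝ} (hζ : 1 < ζ) :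
    ∫ θ in (0 : ℝ)..π, |1 + ζ * cos θ| / (1 + ζ ^ 2 + 2 * ζ * cos θ) ≤ π / ζ := by
  set r := ζ⁻¹
  have hr0 : 0 < r := inv_pos.2 (by linarith)
  have hr1 : r < 1 := inv_lt_one_of_one_lt₀ hζ
  have hD := one_add_sq_add_two_mul_cos_pos (r := r) (by nlinarith)
  set f := fun θ => r * (r + cos θ) / (1 + r ^ 2 + 2 * r * cos θ)
  have hf : ∀ θ, |1 + ζ * cos θ| / (1 + ζ ^ 2 + 2 * ζ * cos θ) = |f θ| := fun θ => by
    rw [← abs_of_nonneg ((one_add_sq_add_two_mul_cos_eq ζ θ).symm ▸ by positivity :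
      0 ≤ 1 + ζ ^ 2 + 2 * ζ * cos θ), ← abs_div, one_add_mul_cos_div_eq_inv (by linarith)]
  have hcont : Continuous f := (by fun_prop : Continuous _).div (by fun_prop) fun θ => (hD θ).ne'
  set c := arccos (-r)
  have hcos_c : cos c = -r := cos_arccos (by linarith) (by linarith)
  have hpos : ∀ θ ∈ Icc 0 c, 0 ≤ f θ := fun θ hθ => by
    have := cos_le_cos_of_nonneg_of_le_pi hθ.1 (arccos_le_pi _) hθ.2
    exact div_nonneg (mul_nonneg hr0.le (by linarith)) (hD θ).le
  have hneg : ∀ θ ∈ Icc c π, f θ ≤ 0 := fun θ hθ => by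
    have := cos_le_cos_of_nonneg_of_le_pi (arccos_nonneg _) hθ.2 hθ.1
    exact div_nonpos_of_nonpos_of_nonneg (mul_nonpos_of_nonneg_of_nonpos hr0.le (by linarith))
      (hD θ).le
  calc ∫ θ in (0 : ℝ)..π, |1 + ζ * cos θ| / (1 + ζ ^ 2 + 2 * ζ * cos θ)
      = ∫ θ in (0 : ℝ)..π, |f θ| := integral_congr fun θ _ => hf θ
    _ = 2 * onePlusArg r c - onePlusArg r 0 - onePlusArg r π :=
      integral_abs_eq_of_hasDerivAt_of_nonneg_of_nonpos (arccos_nonneg _) (arccos_le_pi _)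
        (fun θ _ => hasDerivAt_onePlusArg (by nlinarith [neg_one_le_cos θ]))
        (hcont.intervalIntegrable 0 π) hpos hneg
    _ = 2 * onePlusArg r c := by simp [onePlusArg]
    _ ≤ 2 * arcsin r := by gcongr; exact onePlusArg_le_arcsin hr0.le hr1 c
    _ ≤ 2 * (π / 2 * r) := by gcongr; exact arcsin_le_pi_div_two_mul hr0.le hr1.le
    _ = π / ζ := by ring

theorem stmt_16 (ζ : ℝ) (hζ : 0 < ζ) :
    (∫ θ in (0:ℝ)..π, |1 + ζ * Real.cos θ| / (1 + ζ ^ 2 + 2 * ζ * Real.cos θ))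
      ≤ 2 * π / (1 + ζ) := by
  rcases lt_trichotomy ζ 1 with hlt | rfl | hgt
  · rw [integral_abs_one_add_mul_cos_div_of_abs_lt_one (abs_lt.2 ⟨by linarith, hlt⟩),
      le_div_iff₀ (by linarith)]
    nlinarith [pi_pos]
  · rw [integral_abs_one_add_cos_div]
    linarith [pi_pos]
  · refine (integral_abs_one_add_mul_cos_div_le_of_one_lt hgt).trans ?_
    rw [div_le_div_iff₀ hζ (by linarith)]
    nlinarith [pi_pos]
end
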